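/- arXiv:1708.06070 — 12 statements merged into one kernel-verified Lean document; each statement's English description precedes it below -/
import Mathlib

section
/- Let G be a finite abstract simplicial complex and let X be a real-valued valuation on the subcomplexes of G with X(∅) = 0, i.e. X(A ∪ B) + X(A ∩ B) = X(A) + X(B) for all subcomplexes A, B. Then for every subcomplex A one has X(A) = Σ_{x ∈ A} (X(x̄) − X(x̄ \ {x})), where x̄ = {y : y ⊆ x, y ≠ ∅} is the closure of the simplex x. -/
/-!
Peel off a maximal simplex `x` of `A`: then `A = (A \ {x}) ∪ x̄` with
`(A \ {x}) ∩ x̄ = x̄ \ {x}`, both pieces are subcomplexes (maximality of `x` keeps `A \ {x}`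
closed under faces), and the valuation identity gives
`X(A) = X(A \ {x}) + X(x̄) − X(x̄ \ {x})`. Induction on `A` finishes the proof.
-/

/-- A finite abstract simplicial complex on a type `V`. -/
def IsSimplicialComplex {V : Type*} [DecidableEq V] (G : Finset (Finset V)) : Prop :=
  (∀ x ∈ G, x.Nonempty) ∧ (∀ x ∈ G, ∀ y : Finset V, y ⊆ x → y.Nonempty → y ∈ G)

/-- A subcomplex of `G` is a subset of `G` that is itself a simplicial complex. -/
def IsSubcomplex {V : Type*} [DecidableEq V] (G A : Finset (Finset V)) : Prop :=
  A ⊆ G ∧ IsSimplicialComplex A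

/-- The closure of a simplex `x`: all nonempty subsets of `x`. -/
def simplexClosure {V : Type*} [DecidableEq V] (x : Finset V) : Finset (Finset V) :=
  x.powerset.filter (fun y => y.Nonempty)

open Finset

section
variable {V : Type*} [DecidableEq V]

theorem mem_simplexClosure {x y : Finset V} : y ∈ simplexClosure x ↔ y ⊆ x ∧ y.Nonempty := by
  simp [simplexClosure]

theorem self_mem_simplexClosure {x : Finset V} (hx : x.Nonempty) : x ∈ simplexClosure x :=
  mem_simplexClosure.2 ⟨Subset.rfl, hx⟩

theorem isSimplicialComplex_simplexClosure (x : Finset V) :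
    IsSimplicialComplex (simplexClosure x) :=
  ⟨fun _ hy => (mem_simplexClosure.1 hy).2,
    fun _ hy _ hzy hz => mem_simplexClosure.2 ⟨hzy.trans (mem_simplexClosure.1 hy).1, hz⟩⟩

theorem IsSimplicialComplex.simplexClosure_subset {A : Finset (Finset V)}
    (hA : IsSimplicialComplex A) {x : Finset V} (hx : x ∈ A) : simplexClosure x ⊆ A :=
  fun y hy => hA.2 x hx y (mem_simplexClosure.1 hy).1 (mem_simplexClosure.1 hy).2

theorem IsSimplicialComplex.erase_of_maximal {A : Finset (Finset V)}
    (hA : IsSimplicialComplex A) {x : Finset V} (hx : Maximal (· ∈ A) x) :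
    IsSimplicialComplex (A.erase x) := by
  refine ⟨fun y hy => hA.1 y (mem_of_mem_erase hy),
    fun y hy z hzy hz => mem_erase.2 ⟨?_, hA.2 y (mem_of_mem_erase hy) z hzy hz⟩⟩
  rintro rfl
  exact (mem_erase.1 hy).1 (le_antisymm (hx.2 (mem_of_mem_erase hy) hzy) hzy)

theorem IsSubcomplex.of_subset {G A B : Finset (Finset V)} (hA : IsSubcomplex G A)
    (hB : IsSimplicialComplex B) (hBA : B ⊆ A) : IsSubcomplex G B :=
  ⟨hBA.trans hA.1, hB⟩

theorem valuation_eq_erase_add_of_maximal {G : Finset (Finset V)} {X : Finset (Finset V) → ℝ}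
    (hX : ∀ A B : Finset (Finset V), IsSubcomplex G A → IsSubcomplex G B →
      X (A ∪ B) + X (A ∩ B) = X A + X B)
    {A : Finset (Finset V)} (hA : IsSubcomplex G A) {x : Finset V} (hx : Maximal (· ∈ A) x) :
    X A = X (A.erase x) + (X (simplexClosure x) - X ((simplexClosure x).erase x)) := by
  have hcl : simplexClosure x ⊆ A := hA.2.simplexClosure_subset hx.1
  have hunion : A.erase x ∪ simplexClosure x = A := by
    rw [erase_union_of_mem (self_mem_simplexClosure (hA.2.1 x hx.1)), union_eq_left.2 hcl]
  have hinter : A.erase x ∩ simplexClosure x = (simplexClosure x).erase x := by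
    rw [erase_inter, inter_eq_right.2 hcl]
  have hval := hX _ _ (hA.of_subset (hA.2.erase_of_maximal hx) (erase_subset x A))
    (hA.of_subset (isSimplicialComplex_simplexClosure x) hcl)
  rw [hunion, hinter] at hval
  linarith

end

theorem valuation_eq_sum_over_simplices_general
    {V : Type*} [DecidableEq V] (G : Finset (Finset V))
    (X : Finset (Finset V) → ℝ)
    (hX0 : X ∅ = 0)
    (hX : ∀ A B : Finset (Finset V), IsSubcomplex G A → IsSubcomplex G B →
      X (A ∪ B) + X (A ∩ B) = X A + X B)
    (A : Finset (Finset V)) (hA : IsSubcomplex G A) :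
    X A = ∑ x ∈ A, (X (simplexClosure x) - X ((simplexClosure x).erase x)) := by
  induction A using Finset.strongInduction with
  | H A ih =>
  obtain rfl | hne := A.eq_empty_or_nonempty
  · simpa using hX0
  obtain ⟨x, hx⟩ := A.exists_maximal hne
  have hErase : IsSubcomplex G (A.erase x) :=
    hA.of_subset (hA.2.erase_of_maximal hx) (erase_subset x A)
  rw [valuation_eq_erase_add_of_maximal hX hA hx, ih _ (erase_ssubset hx.1) hErase,
    sum_erase_add _ _ hx.1]

/-- a valuation `X` (vanishing on the empty complex) on the subcomplexes
of a simplicial complex `G` is determined by its values on simplex closures: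
`X(A) = ∑_{x ∈ A} (X(x̄) − X(x̄ \ {x}))`. -/
theorem valuation_eq_sum_over_simplices
    {V : Type*} [DecidableEq V] (G : Finset (Finset V))
    (hG : IsSimplicialComplex G)
    (X : Finset (Finset V) → ℝ)
    (hX0 : X ∅ = 0)
    (hX : ∀ A B : Finset (Finset V), IsSubcomplex G A → IsSubcomplex G B →
      X (A ∪ B) + X (A ∩ B) = X A + X B)
    (A : Finset (Finset V)) (hA : IsSubcomplex G A) :
    X A = ∑ x ∈ A, (X (simplexClosure x) - X ((simplexClosure x).erase x)) :=
  valuation_eq_sum_over_simplices_general G X hX0 hX A hA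
end

section
/- Gauss–Bonnet for simplicial complexes: let G be a finite abstract simplicial complex, with vertex set V(G) = {v : {v} ∈ G}. Define the curvature of a vertex v by K(v) = Σ_{x ∈ G, v ∈ x} (−1)^(card(x)−1) / card(x) ∈ ℚ. Then Σ_{v ∈ V(G)} K(v) = χ(G), the Euler characteristic of G. -/
/-!
Each simplex `x` spreads its contribution `(-1)^(card x - 1)` to the Euler characteristic evenly
over its `card x` vertices; summing the curvatures just collects these shares again.
-/

open Finset

theorem Finset.sum_sum_filter_mem_div_card {α K : Type*} [DecidableEq α] [Semifield K]
    [CharZero K] {s : Finset α} {G : Finset (Finset α)} (hG : ∀ x ∈ G, x.Nonempty ∧ x ⊆ s)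
    (f : Finset α → K) :
    ∑ v ∈ s, ∑ x ∈ G with v ∈ x, f x / #x = ∑ x ∈ G, f x := by
  rw [sum_comm' (t' := G) (s' := id) fun v x => ?_]
  · refine sum_congr rfl fun x hx => ?_
    have hcard : (#x : K) ≠ 0 := Nat.cast_ne_zero.mpr (hG x hx).1.card_ne_zero
    rw [id, sum_const, nsmul_eq_mul, mul_div_cancel₀ _ hcard]
  · simp only [mem_filter, id]
    exact ⟨fun ⟨_, hx, hv⟩ => ⟨hv, hx⟩, fun ⟨hv, hx⟩ => ⟨(hG x hx).2 hv, hx, hv⟩⟩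

theorem IsSimplicialComplex.subset_vertices {V : Type*} [DecidableEq V] [Fintype V]
    {G : Finset (Finset V)} (hG : IsSimplicialComplex G) {x : Finset V} (hx : x ∈ G) :
    x ⊆ univ.filter fun v => {v} ∈ G := fun v hv =>
  mem_filter.mpr ⟨mem_univ v, hG.2 x hx {v} (singleton_subset_iff.mpr hv) (singleton_nonempty v)⟩

/-- Gauss–Bonnet: the sum over all vertices of the curvature
`K(v) = ∑_{x ∈ G, v ∈ x} (−1)^(card x − 1) / card x` equals the Euler characteristic
`χ(G) = ∑_{x ∈ G} (−1)^(card x − 1)`. -/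
theorem gauss_bonnet
    {V : Type*} [DecidableEq V] [Fintype V] (G : Finset (Finset V))
    (hG : IsSimplicialComplex G) :
    ∑ v ∈ Finset.univ.filter (fun v : V => {v} ∈ G),
        (∑ x ∈ G.filter (fun x => v ∈ x), ((-1 : ℚ) ^ (x.card - 1) / (x.card : ℚ)))
      = ∑ x ∈ G, (-1 : ℚ) ^ (x.card - 1) :=
  sum_sum_filter_mem_div_card (fun x hx => ⟨hG.1 x hx, hG.subset_vertices hx⟩) _
end

section
/- Let G be a finite abstract simplicial complex and v a vertex of G. Let V_k(v) denote the number of k-dimensional simplices in the unit sphere of v, i.e. V_k(v) = card{y ∈ G : card(y) = k+1, v ∉ y, y ∪ {v} ∈ G}. Then the curvature K(v) = Σ_{x ∈ G, v ∈ x} (−1)^(card(x)−1) / card(x) satisfies K(v) = 1 − V_0(v)/2 + V_1(v)/3 − V_2(v)/4 + ⋯, i.e. K(v) = 1 + Σ_{k ≥ 0} (−1)^(k+1) V_k(v)/(k+2). -/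
/-- The number of `k`-dimensional simplices in the unit sphere (link) of a vertex `v`. -/
def sphereCount {V : Type*} [DecidableEq V] (G : Finset (Finset V)) (v : V) (k : ℕ) : ℕ :=
  (G.filter (fun y => y.card = k + 1 ∧ v ∉ y ∧ y ∪ {v} ∈ G)).card

/-! Removing `v` is a bijection from the simplices through `v` other than `{v}` onto the unit
sphere of `v`, lowering the cardinality by one. Grouping the curvature sum by cardinality, the
simplex `{v}` contributes `1` and the `V_k(v)` simplices through `v` of cardinality `k + 2`
contribute `(-1)^(k+1)/(k+2)` each. -/

open Finset

theorem Finset.sum_comp_eq_sum_range_nsmul {α M : Type*} [AddCommMonoid M] (s : Finset α)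
    (g : α → ℕ) (f : ℕ → M) (d : ℕ) (hs : ∀ a ∈ s, 2 ≤ g a ∧ g a ≤ d) :
    ∑ a ∈ s, f (g a) = ∑ k ∈ range d, #{a ∈ s | g a = k + 2} • f (k + 2) := by
  rw [← sum_fiberwise_of_maps_to (g := fun a => g a - 2) (t := range d)
    fun a ha => mem_range.2 (by have := hs a ha; omega)]
  refine sum_congr rfl fun k _ => ?_
  have hfiber : {a ∈ s | g a - 2 = k} = {a ∈ s | g a = k + 2} :=
    filter_congr fun a ha => by have := hs a ha; omega
  rw [hfiber, ← sum_const]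
  exact sum_congr rfl fun a ha => by rw [(mem_filter.1 ha).2]

section SimplicialComplex

variable {V : Type*} [DecidableEq V] {G : Finset (Finset V)} {v : V}

theorem filter_mem_eq_insert_singleton (hv : {v} ∈ G) :
    G.filter (v ∈ ·) = insert {v} (G.filter fun x => v ∈ x ∧ 2 ≤ x.card) := by
  ext x
  simp only [mem_filter, mem_insert]
  constructor
  · rintro ⟨hxG, hvx⟩
    rcases eq_singleton_or_nontrivial hvx with rfl | hx
    · exact Or.inl rfl
    · exact Or.inr ⟨hxG, hvx, one_lt_card_iff_nontrivial.2 hx⟩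
  · rintro (rfl | ⟨hxG, hvx, -⟩)
    · exact ⟨hv, mem_singleton_self v⟩
    · exact ⟨hxG, hvx⟩

theorem sphereCount_eq_card_filter_mem (hG : IsSimplicialComplex G) (k : ℕ) :
    sphereCount G v k = #{x ∈ G | v ∈ x ∧ x.card = k + 2} := by
  refine card_nbij' (insert v) (·.erase v) ?_ ?_ ?_ ?_
  · intro y hy
    obtain ⟨-, hcard, hvy, hyv⟩ := mem_filter.1 hy
    rw [union_comm, ← insert_eq] at hyv
    exact mem_filter.2 ⟨hyv, mem_insert_self v y, by rw [card_insert_of_notMem hvy, hcard]⟩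
  · intro x hx
    obtain ⟨hxG, hvx, hcard⟩ := mem_filter.1 hx
    have hcard' : (x.erase v).card = k + 1 := by rw [card_erase_of_mem hvx, hcard]; rfl
    refine mem_filter.2 ⟨hG.2 x hxG _ (erase_subset v x) ?_, hcard', notMem_erase v x, ?_⟩
    · rw [← card_pos, hcard']; exact k.succ_pos
    · rwa [union_comm, ← insert_eq, insert_erase hvx]
  · exact fun y hy => erase_insert (mem_filter.1 hy).2.2.1
  · exact fun x hx => insert_erase (mem_filter.1 hx).2.1

end SimplicialComplex

/-- the curvature `K(v) = ∑_{x ∈ G, v ∈ x} (−1)^(card x − 1)/card x` of a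
vertex equals `1 + ∑_{k ≥ 0} (−1)^(k+1) V_k(v)/(k+2)`, where `V_k(v)` counts the
`k`-simplices in the unit sphere of `v` (the sum is finite: it is truncated at the
maximal cardinality `d` of a simplex of `G`, beyond which `V_k(v) = 0`). -/
theorem curvature_eq_sphere_sum
    {V : Type*} [DecidableEq V] (G : Finset (Finset V))
    (hG : IsSimplicialComplex G) (v : V) (hv : ({v} : Finset V) ∈ G) :
    ∑ x ∈ G.filter (fun x => v ∈ x), ((-1 : ℚ) ^ (x.card - 1) / (x.card : ℚ))
      = 1 + ∑ k ∈ Finset.range (G.sup Finset.card),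
          (-1 : ℚ) ^ (k + 1) * (sphereCount G v k : ℚ) / ((k : ℚ) + 2) := by
  have hv_notMem : {v} ∉ G.filter fun x => v ∈ x ∧ 2 ≤ x.card := by simp
  rw [filter_mem_eq_insert_singleton hv, sum_insert hv_notMem, card_singleton,
    sum_comp_eq_sum_range_nsmul _ card (fun n => (-1 : ℚ) ^ (n - 1) / n) (G.sup card)
      fun x hx => ⟨(mem_filter.1 hx).2.2, le_sup (mem_filter.1 hx).1⟩,
    Nat.sub_self, pow_zero, Nat.cast_one, div_one]
  refine congrArg (1 + ·) (sum_congr rfl fun k _ => ?_)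
  have hfiber : #{x ∈ G.filter (fun x => v ∈ x ∧ 2 ≤ x.card) | x.card = k + 2}
      = sphereCount G v k := by
    rw [sphereCount_eq_card_filter_mem hG, filter_filter]
    exact congrArg card (filter_congr fun x _ =>
      ⟨fun h => ⟨h.1.1, h.2⟩, fun h => ⟨⟨h.1, by omega⟩, h.2⟩⟩)
  rw [hfiber, nsmul_eq_mul, show k + 2 - 1 = k + 1 from rfl]
  push_cast
  ring
end

section
/- Poincaré–Hopf for simplicial complexes: let G be a finite abstract simplicial complex with vertex set V(G) = {v : {v} ∈ G}, and let f : V(G) → ℝ be injective. For a vertex v define S_f⁻(v) = {y ∈ G : v ∉ y, y ∪ {v} ∈ G, and f(w) < f(v) for all w ∈ y} and the index i_f(v) = 1 − χ(S_f⁻(v)), where χ(S) = Σ_{y ∈ S} (−1)^(card(y)−1). Then χ(G) = Σ_{v ∈ V(G)} i_f(v). -/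
/-- Euler characteristic of a finite set of nonempty finite sets. -/
def eulerChar {V : Type*} (S : Finset (Finset V)) : ℤ :=
  ∑ x ∈ S, (-1 : ℤ) ^ (x.card - 1)

section

open Finset

theorem card_filter_forall_le_eq_one {V : Type*} {x : Finset V} (hx : x.Nonempty) (f : V → ℝ)
    (hf : Set.InjOn f x) : #(x.filter fun v => ∀ w ∈ x, f w ≤ f v) = 1 := by
  obtain ⟨v, hvx, hv⟩ := x.exists_max_image f hx
  refine card_eq_one.2 ⟨v, ext fun u => ?_⟩
  simp only [mem_filter, mem_singleton]
  refine ⟨fun ⟨hux, hu⟩ => hf hux hvx (le_antisymm (hv u hux) (hu v hvx)), ?_⟩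
  rintro rfl
  exact ⟨hvx, hv⟩

variable {V : Type*} [DecidableEq V]

theorem IsSimplicialComplex.singleton_mem {G : Finset (Finset V)} (hG : IsSimplicialComplex G)
    {x : Finset V} (hx : x ∈ G) {w : V} (hw : w ∈ x) : {w} ∈ G :=
  hG.2 x hx {w} (singleton_subset_iff.2 hw) (singleton_nonempty w)

theorem eulerChar_image_insert (S : Finset (Finset V)) {v : V}
    (hS : ∀ y ∈ S, y.Nonempty ∧ v ∉ y) : eulerChar (S.image (insert v)) = -eulerChar S := by
  have hinj : Set.InjOn (insert v) (S : Set (Finset V)) := fun y hy z hz hyz => by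
    rw [← erase_insert (hS y hy).2, hyz, erase_insert (hS z hz).2]
  rw [eulerChar, eulerChar, sum_image hinj, ← sum_neg_distrib]
  refine sum_congr rfl fun y hy => ?_
  obtain ⟨hne, hvy⟩ := hS y hy
  -- `#y ≥ 1`, so the truncated subtraction `#y - 1` is harmless
  obtain ⟨n, hn⟩ := Nat.exists_eq_add_of_lt hne.card_pos
  rw [card_insert_of_notMem hvy, hn]
  simp [pow_succ]

variable (G : Finset (Finset V)) (f : V → ℝ) (v : V)

noncomputable def lowerStar : Finset (Finset V) :=
  G.filter fun x => v ∈ x ∧ ∀ w ∈ x, f w ≤ f v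

/-- The set `S_f⁻(v)` of the statement. -/
noncomputable def lowerLink : Finset (Finset V) :=
  G.filter fun y => v ∉ y ∧ y ∪ {v} ∈ G ∧ ∀ w ∈ y, f w < f v

variable {G f}

theorem sum_eq_sum_sum_lowerStar [Fintype V] (hG : IsSimplicialComplex G)
    (hf : Set.InjOn f {v : V | ({v} : Finset V) ∈ G}) (a : Finset V → ℤ) :
    ∑ x ∈ G, a x = ∑ v ∈ univ.filter (fun v : V => {v} ∈ G), ∑ x ∈ lowerStar G f v, a x := by
  calc ∑ x ∈ G, a x = ∑ x ∈ G, ∑ _v ∈ x.filter (fun v => ∀ w ∈ x, f w ≤ f v), a x := by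
        refine sum_congr rfl fun x hx => ?_
        rw [sum_const]
        -- `convert` rather than `rw`: with `[Fintype V]` in scope the filter elaborates with
        -- a different decidability instance than in `card_filter_forall_le_eq_one`
        convert (one_nsmul (a x)).symm
        convert card_filter_forall_le_eq_one (hG.1 x hx) f
          (hf.mono fun w hw => hG.singleton_mem hx hw)
    _ = _ := by
        refine sum_comm' fun x v => ?_
        simp only [lowerStar, mem_filter, mem_univ, true_and]
        exact ⟨fun ⟨hx, hvx, hv⟩ => ⟨⟨hx, hvx, hv⟩, hG.singleton_mem hx hvx⟩,
          fun ⟨⟨hx, hvx, hv⟩, _⟩ => ⟨hx, hvx, hv⟩⟩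

theorem lowerStar_eq_insert_image (hG : IsSimplicialComplex G)
    (hf : Set.InjOn f {v : V | ({v} : Finset V) ∈ G}) (hv : {v} ∈ G) :
    lowerStar G f v = insert {v} ((lowerLink G f v).image (insert v)) := by
  ext x
  simp only [lowerStar, lowerLink, mem_insert, mem_image, mem_filter]
  constructor
  · rintro ⟨hx, hvx, hle⟩
    refine or_iff_not_imp_left.2 fun hxv => ⟨x.erase v, ?_, insert_erase hvx⟩
    have hunion : x.erase v ∪ {v} = x := by rw [union_comm, ← insert_eq, insert_erase hvx]
    have hne : (x.erase v).Nonempty :=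
      (erase_nonempty hvx).2 ((nontrivial_iff_ne_singleton hvx).2 hxv)
    refine ⟨hG.2 x hx _ (erase_subset v x) hne, notMem_erase v x, by rwa [hunion], fun w hw => ?_⟩
    have hwx := mem_of_mem_erase hw
    exact (hle w hwx).lt_of_ne fun hfw =>
      ne_of_mem_erase hw (hf (hG.singleton_mem hx hwx) hv hfw)
  · rintro (rfl | ⟨y, ⟨-, -, hyv, hlt⟩, rfl⟩)
    · exact ⟨hv, mem_singleton_self v, fun w hw => by rw [mem_singleton.1 hw]⟩
    · refine ⟨by rwa [insert_eq, union_comm], mem_insert_self v y, fun w hw => ?_⟩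
      rcases mem_insert.1 hw with rfl | hwy
      exacts [le_rfl, (hlt w hwy).le]

theorem eulerChar_lowerStar (hG : IsSimplicialComplex G)
    (hf : Set.InjOn f {v : V | ({v} : Finset V) ∈ G}) (hv : {v} ∈ G) :
    eulerChar (lowerStar G f v) = 1 - eulerChar (lowerLink G f v) := by
  have hlink : ∀ y ∈ lowerLink G f v, y.Nonempty ∧ v ∉ y := fun y hy =>
    ⟨hG.1 y (mem_filter.1 hy).1, (mem_filter.1 hy).2.1⟩
  have hsingleton : {v} ∉ (lowerLink G f v).image (insert v) := fun h => by
    obtain ⟨y, hy, hyv⟩ := mem_image.1 h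
    obtain ⟨⟨w, hw⟩, hvy⟩ := hlink y hy
    exact hvy (mem_singleton.1 (hyv ▸ mem_insert_of_mem hw) ▸ hw)
  rw [lowerStar_eq_insert_image v hG hf hv, eulerChar, sum_insert hsingleton, ← eulerChar,
    eulerChar_image_insert _ hlink]
  simp [sub_eq_add_neg]

end

/-- Poincaré–Hopf: for an injective function `f` on the vertex set of a
finite abstract simplicial complex `G`, the Euler characteristic of `G` is the sum of
the indices `i_f(v) = 1 − χ(S_f⁻(v))` over all vertices, where `S_f⁻(v)` consists of
the simplices `y` of the link of `v` all of whose vertices have `f`-value below `f(v)`. -/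
theorem poincare_hopf
    {V : Type*} [DecidableEq V] [Fintype V] (G : Finset (Finset V))
    (hG : IsSimplicialComplex G)
    (f : V → ℝ) (hf : Set.InjOn f {v : V | ({v} : Finset V) ∈ G}) :
    eulerChar G
      = ∑ v ∈ Finset.univ.filter (fun v : V => {v} ∈ G),
          (1 - eulerChar (G.filter
            (fun y => v ∉ y ∧ y ∪ {v} ∈ G ∧ ∀ w ∈ y, f w < f v))) := by
  rw [eulerChar, sum_eq_sum_sum_lowerStar hG hf]
  refine Finset.sum_congr rfl fun v hv => ?_
  rw [← eulerChar, eulerChar_lowerStar v hG hf (Finset.mem_filter.1 hv).2, lowerLink]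
  -- the two filters differ only in their decidability instances
  congr!
end

section
/- Index expectation: let G be a finite abstract simplicial complex with vertex set V(G) of cardinality n. For an injective function f : V(G) → ℝ and a vertex v, let i_f(v) = Σ_{x ∈ G : v ∈ x and f(w) ≤ f(v) for all w ∈ x} (−1)^(card(x)−1). Then the average of i_f(v) over all bijections f : V(G) → {1, …, n} (equivalently, over all n! linear orders on V(G)) equals the curvature K(v) = Σ_{x ∈ G, v ∈ x} (−1)^(card(x)−1) / card(x). -/
/-- The vertex set of a complex `G`: the elements `v` with `{v} ∈ G`. -/
def vertexSet {V : Type*} [DecidableEq V] [Fintype V] (G : Finset (Finset V)) : Finset V :=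
  Finset.univ.filter (fun v => ({v} : Finset V) ∈ G)

/-- The function `V → ℕ` induced by a bijection `σ` from the vertex set onto `Fin n`
(i.e. a labelling of the vertices by `{1, …, n}`); non-vertices get the value `0`. -/
def orderFun {V : Type*} [DecidableEq V] [Fintype V] (G : Finset (Finset V)) (n : ℕ)
    (σ : {v // v ∈ vertexSet G} ≃ Fin n) (w : V) : ℕ :=
  if h : w ∈ vertexSet G then (σ ⟨w, h⟩ : ℕ) + 1 else 0

/-- The Poincaré–Hopf index of `f` at `v`:
`i_f(v) = ∑_{x ∈ G, v ∈ x, f(w) ≤ f(v) ∀ w ∈ x} (−1)^(card x − 1)`. -/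
def indexAt {V : Type*} [DecidableEq V] (G : Finset (Finset V)) (f : V → ℕ) (v : V) : ℤ :=
  ∑ x ∈ G.filter (fun x => v ∈ x ∧ ∀ w ∈ x, f w ≤ f v), (-1 : ℤ) ^ (x.card - 1)

/-! Fix a simplex `x ∋ v`. By relabelling with transpositions, each vertex of `x` is the
`f`-maximal one for the same number of labellings `f`, so `v` is maximal on `x` for exactly
`n! / card x` of them. Summing the contribution `(−1)^(card x − 1)` of `x` to `i_f(v)` over
all `f` and dividing by `n!` leaves the term `(−1)^(card x − 1) / card x` of `K(v)`. -/

open Finset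

section MaxLabel

variable {α β : Type*} [DecidableEq α] [Fintype α] [DecidableEq β] [Fintype β] [LinearOrder β]

def maxLabelled (S : Finset α) (u : α) : Finset (α ≃ β) :=
  univ.filter fun σ => ∀ w ∈ S, σ w ≤ σ u

theorem mem_maxLabelled {S : Finset α} {u : α} {σ : α ≃ β} :
    σ ∈ maxLabelled S u ↔ ∀ w ∈ S, σ w ≤ σ u := by
  simp [maxLabelled]

theorem swap_trans_mem_maxLabelled {S : Finset α} {a b : α} (ha : a ∈ S) (hb : b ∈ S)
    {σ : α ≃ β} (hσ : σ ∈ maxLabelled S a) : (Equiv.swap a b).trans σ ∈ maxLabelled S b := by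
  rw [mem_maxLabelled] at hσ ⊢
  intro w hw
  have hsw : Equiv.swap a b w ∈ S := by
    rcases eq_or_ne w a with rfl | hwa
    · simpa using hb
    rcases eq_or_ne w b with rfl | hwb
    · simpa using ha
    · rwa [Equiv.swap_apply_of_ne_of_ne hwa hwb]
  simpa using hσ _ hsw

theorem card_maxLabelled_eq {S : Finset α} {a b : α} (ha : a ∈ S) (hb : b ∈ S) :
    #(maxLabelled (β := β) S a) = #(maxLabelled (β := β) S b) :=
  card_bij' (fun σ _ => (Equiv.swap a b).trans σ) (fun σ _ => (Equiv.swap a b).trans σ)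
    (fun _ hσ => swap_trans_mem_maxLabelled ha hb hσ)
    (fun σ hσ => Equiv.swap_comm a b ▸ swap_trans_mem_maxLabelled hb ha hσ)
    (fun σ _ => by ext; simp) (fun σ _ => by ext; simp)

theorem pairwiseDisjoint_maxLabelled (S : Finset α) :
    (S : Set α).PairwiseDisjoint (maxLabelled (β := β) S) := by
  intro a ha b hb hab
  refine disjoint_left.2 fun σ hσa hσb => hab (σ.injective ?_)
  rw [mem_maxLabelled] at hσa hσb
  exact le_antisymm (hσb a ha) (hσa b hb)

theorem biUnion_maxLabelled {S : Finset α} (hS : S.Nonempty) :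
    S.biUnion (maxLabelled (β := β) S) = univ := by
  refine eq_univ_of_forall fun σ => mem_biUnion.2 ?_
  obtain ⟨u, hu, hmax⟩ := S.exists_max_image σ hS
  exact ⟨u, hu, mem_maxLabelled.2 hmax⟩

theorem card_maxLabelled_mul_card {S : Finset α} {v : α} (hv : v ∈ S) :
    #(maxLabelled (β := β) S v) * #S = Fintype.card (α ≃ β) := by
  calc #(maxLabelled S v) * #S = ∑ u ∈ S, #(maxLabelled (β := β) S u) := by
        rw [sum_congr rfl fun u hu => card_maxLabelled_eq hu hv, sum_const, smul_eq_mul,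
          mul_comm]
    _ = Fintype.card (α ≃ β) := by
        rw [← card_biUnion (pairwiseDisjoint_maxLabelled S), biUnion_maxLabelled ⟨v, hv⟩,
          card_univ]

end MaxLabel

theorem sum_indexAt_eq {V ι : Type*} [DecidableEq V] [Fintype ι] (G : Finset (Finset V))
    (f : ι → V → ℕ) (v : V) :
    ∑ i, indexAt G (f i) v
      = ∑ x ∈ G.filter (v ∈ ·), (#(univ.filter fun i => ∀ w ∈ x, f i w ≤ f i v) : ℤ)
          * (-1) ^ (#x - 1) := by
  simp only [indexAt]
  rw [sum_comm' (t' := G.filter (v ∈ ·))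
    (s' := fun x => univ.filter fun i => ∀ w ∈ x, f i w ≤ f i v) (by simp; tauto)]
  simp only [sum_const, nsmul_eq_mul]

section Complex

variable {V : Type*} [DecidableEq V] [Fintype V] {G : Finset (Finset V)}

theorem IsSimplicialComplex.subset_vertexSet (hG : IsSimplicialComplex G) {x : Finset V} (hx : x ∈ G) :
    x ⊆ vertexSet G := fun w hw => by
  simpa [vertexSet] using hG.2 x hx {w} (singleton_subset_iff.2 hw) (singleton_nonempty w)

theorem orderFun_le_orderFun_iff {n : ℕ} (σ : {v // v ∈ vertexSet G} ≃ Fin n) {w v : V}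
    (hw : w ∈ vertexSet G) (hv : v ∈ vertexSet G) :
    orderFun G n σ w ≤ orderFun G n σ v ↔ σ ⟨w, hw⟩ ≤ σ ⟨v, hv⟩ := by
  rw [orderFun, orderFun, dif_pos hw, dif_pos hv, Fin.le_def, add_le_add_iff_right]

theorem card_orderFun_max_mul_card (hG : IsSimplicialComplex G) {n : ℕ}
    (hn : n = #(vertexSet G)) {x : Finset V} (hx : x ∈ G) {v : V} (hvx : v ∈ x) :
    #(univ.filter fun σ : {v // v ∈ vertexSet G} ≃ Fin n =>
        ∀ w ∈ x, orderFun G n σ w ≤ orderFun G n σ v) * #x = n.factorial := by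
  have hxK := hG.subset_vertexSet hx
  set S := x.subtype (· ∈ vertexSet G)
  have hcardS : #S = #x := by rw [card_subtype, filter_true_of_mem hxK]
  have hmax : ∀ σ : {v // v ∈ vertexSet G} ≃ Fin n,
      (∀ w ∈ x, orderFun G n σ w ≤ orderFun G n σ v) ↔ σ ∈ maxLabelled S ⟨v, hxK hvx⟩ := by
    intro σ
    simp only [mem_maxLabelled, S, mem_subtype, Subtype.forall]
    exact forall_congr' fun w => ⟨fun h hw hwx => (orderFun_le_orderFun_iff σ hw _).1 (h hwx),
      fun h hwx => (orderFun_le_orderFun_iff σ (hxK hwx) _).2 (h _ hwx)⟩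
  have hcardK : Fintype.card {v // v ∈ vertexSet G} = n := by simp [hn]
  rw [filter_congr fun σ _ => hmax σ, filter_mem_eq_inter, univ_inter, ← hcardS,
    card_maxLabelled_mul_card (mem_subtype.2 hvx),
    Fintype.card_equiv (Fintype.equivFinOfCardEq hcardK), hcardK]

end Complex

theorem index_expectation_general
    {V : Type*} [DecidableEq V] [Fintype V] (G : Finset (Finset V))
    (hG : IsSimplicialComplex G)
    (n : ℕ) (hn : n = (vertexSet G).card)
    (v : V) :
    (∑ σ : {v // v ∈ vertexSet G} ≃ Fin n, (indexAt G (orderFun G n σ) v : ℚ))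
        / (n.factorial : ℚ)
      = ∑ x ∈ G.filter (fun x => v ∈ x), (-1 : ℚ) ^ (x.card - 1) / (x.card : ℚ) := by
  rw [← Int.cast_sum, sum_indexAt_eq, Int.cast_sum, sum_div]
  refine sum_congr rfl fun x hx => ?_
  obtain ⟨hxG, hvx⟩ := mem_filter.1 hx
  have hx0 : (#x : ℚ) ≠ 0 := by exact_mod_cast (hG.1 x hxG).card_pos.ne'
  have hfac : (n.factorial : ℚ) ≠ 0 := by exact_mod_cast n.factorial_ne_zero
  rw [div_eq_div_iff hfac hx0, ← card_orderFun_max_mul_card hG hn hxG hvx]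
  push_cast
  rw [mul_right_comm, mul_comm]
  -- the two counts differ only in the `Decidable` instance of their filters
  congr!

/-- index expectation: the average of the index `i_f(v)` over all `n!`
bijections `f` from the vertex set to `{1, …, n}` equals the curvature
`K(v) = ∑_{x ∈ G, v ∈ x} (−1)^(card x − 1)/card x`. -/
theorem index_expectation
    {V : Type*} [DecidableEq V] [Fintype V] (G : Finset (Finset V))
    (hG : IsSimplicialComplex G)
    (n : ℕ) (hn : n = (vertexSet G).card)
    (v : V) (hv : ({v} : Finset V) ∈ G) :
    (∑ σ : {v // v ∈ vertexSet G} ≃ Fin n, (indexAt G (orderFun G n σ) v : ℚ))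
        / (n.factorial : ℚ)
      = ∑ x ∈ G.filter (fun x => v ∈ x), (-1 : ℚ) ^ (x.card - 1) / (x.card : ℚ) :=
  index_expectation_general G hG n hn v
end

section
/- Barycentric refinement of the f-vector: let G be a finite abstract simplicial complex and let its Barycentric refinement G₁ be the set of nonempty finite subsets c ⊆ G that are chains, i.e. for all a, b ∈ c, a ⊆ b or b ⊆ a. Let v_j(G) be the number of simplices of G of cardinality j+1 and v_k(G₁) the number of chains of cardinality k+1. Then v_k(G₁) = Σ_j s(j+1, k+1) · v_j(G), where s(m, r) is the number of surjective functions from a set of m elements onto a set of r elements. -/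
/-- The Barycentric refinement of `G`: all nonempty finite subsets of `G` that are
chains under inclusion. -/
def barycentric {V : Type*} [DecidableEq V] (G : Finset (Finset V)) :
    Finset (Finset (Finset V)) :=
  G.powerset.filter (fun c => c.Nonempty ∧ ∀ a ∈ c, ∀ b ∈ c, a ⊆ b ∨ b ⊆ a)

/-- The number of surjective functions from a set of `m` elements onto a set of `r`
elements. -/
def surjCount (m r : ℕ) : ℕ :=
  (Finset.univ.filter (fun f : Fin m → Fin r => Function.Surjective f)).card

/-!
Every chain `c` in `G` has a largest member `c.sup id ∈ G`, so the chains with `k + 1` members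
are partitioned according to their top simplex `x`. The chains `y₀ ⊂ ⋯ ⊂ y_k = x` of nonempty
subsets of `x` correspond to the surjections `x → Fin (k + 1)`: a chain gives
`v ↦ #{i | v ∉ yᵢ}` (its `chainRank`), and a surjection `f` gives back its sublevel sets
`{v | f v ≤ i}`. Hence each `x ∈ G` tops `s(#x, k + 1)` such chains, and grouping the simplices
by cardinality gives the formula.
-/

open Finset

theorem card_filter_surjective_eq_surjCount (α : Type*) [Fintype α] [DecidableEq α] (r : ℕ) :
    #{f : α → Fin r | Function.Surjective f} = surjCount (Fintype.card α) r :=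
  card_equiv ((Fintype.equivFin α).arrowCongr (Equiv.refl _)) fun f => by
    simp only [mem_filter, mem_univ, true_and]
    exact (Equiv.surjective_comp (Fintype.equivFin α).symm f).symm

theorem sum_comp_card_eq_sum_range {ι : Type*} (G : Finset (Finset ι))
    (hG : ∀ x ∈ G, x.Nonempty) (g : ℕ → ℕ) :
    ∑ x ∈ G, g #x = ∑ j ∈ range (G.sup card), g (j + 1) * #{x ∈ G | #x = j + 1} := by
  have hmaps : ∀ x ∈ G, #x - 1 ∈ range (G.sup card) := fun x hx => by
    have := (hG x hx).card_pos
    have := le_sup (f := card) hx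
    rw [mem_range]
    omega
  calc ∑ x ∈ G, g #x = ∑ x ∈ G, g (#x - 1 + 1) :=
        sum_congr rfl fun x hx => by rw [Nat.sub_add_cancel (hG x hx).card_pos]
    _ = ∑ j ∈ range (G.sup card), ∑ x ∈ G with #x - 1 = j, g (j + 1) :=
        (sum_fiberwise_of_maps_to' hmaps fun j => g (j + 1)).symm
    _ = _ := sum_congr rfl fun j _ => by
        have hfiber : {x ∈ G | #x - 1 = j} = {x ∈ G | #x = j + 1} :=
          filter_congr fun x hx => by have := (hG x hx).card_pos; omega
        rw [hfiber, sum_const, smul_eq_mul, mul_comm]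

section BarycentricChains

variable {V : Type*}

section Chain

variable [DecidableEq V] {c : Finset (Finset V)}

def chainRank (c : Finset (Finset V)) (v : V) : ℕ := #{y ∈ c | v ∉ y}

theorem chainRank_lt_card {x : Finset V} {v : V} (hx : x ∈ c) (hv : v ∈ x) :
    chainRank c v < #c :=
  card_lt_card (filter_ssubset.2 ⟨x, hx, not_not.2 hv⟩)

theorem card_filter_ssubset_lt_card {y : Finset V} (hy : y ∈ c) : #{z ∈ c | z ⊂ y} < #c :=
  card_lt_card (filter_ssubset.2 ⟨y, hy, ssubset_irrefl y⟩)

theorem mem_iff_chainRank_le (hc : ∀ a ∈ c, ∀ b ∈ c, a ⊆ b ∨ b ⊆ a) {y : Finset V}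
    (hy : y ∈ c) {v : V} : v ∈ y ↔ chainRank c v ≤ #{z ∈ c | z ⊂ y} := by
  constructor
  · intro hv
    refine card_le_card fun z hz => ?_
    rw [mem_filter] at hz ⊢
    refine ⟨hz.1, ?_⟩
    rcases hc z hz.1 y hy with h | h
    · exact h.ssubset_of_ne (by rintro rfl; exact hz.2 hv)
    · exact absurd (h hv) hz.2
  · intro hle
    by_contra hv
    have hsub : insert y {z ∈ c | z ⊂ y} ⊆ {z ∈ c | v ∉ z} := by
      intro z hz
      rcases mem_insert.1 hz with rfl | hz
      · exact mem_filter.2 ⟨hy, hv⟩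
      · rw [mem_filter] at hz ⊢
        exact ⟨hz.1, fun hvz => hv (hz.2.subset hvz)⟩
    have hlt := card_le_card hsub
    rw [card_insert_of_notMem (by simp)] at hlt
    exact absurd hle (by unfold chainRank; omega)

theorem sup_mem_of_chain (hne : c.Nonempty) (hc : ∀ a ∈ c, ∀ b ∈ c, a ⊆ b ∨ b ⊆ a) :
    c.sup id ∈ c := by
  refine SupClosed.finsetSup_mem (fun a ha b hb => ?_) hne fun _ h => h
  rcases hc a ha b hb with h | h
  · rwa [sup_eq_right.2 h]
  · rwa [sup_eq_left.2 h]

theorem sup_mem_of_mem_barycentric {G : Finset (Finset V)} (hc : c ∈ barycentric G) :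
    c.sup id ∈ G := by
  obtain ⟨hcG, hne, hch⟩ := mem_filter.1 hc
  exact mem_powerset.1 hcG (sup_mem_of_chain hne hch)

def chainsWithTop (x : Finset V) (n : ℕ) : Finset (Finset (Finset V)) :=
  {c ∈ x.powerset.powerset |
    x ∈ c ∧ (∀ y ∈ c, y.Nonempty) ∧ (∀ a ∈ c, ∀ b ∈ c, a ⊆ b ∨ b ⊆ a) ∧ #c = n}

theorem mem_chainsWithTop {x : Finset V} {n : ℕ} :
    c ∈ chainsWithTop x n ↔ (∀ y ∈ c, y ⊆ x) ∧
      x ∈ c ∧ (∀ y ∈ c, y.Nonempty) ∧ (∀ a ∈ c, ∀ b ∈ c, a ⊆ b ∨ b ⊆ a) ∧ #c = n := by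
  simp only [chainsWithTop, mem_filter, mem_powerset, subset_iff]

theorem filter_sup_eq_chainsWithTop {G : Finset (Finset V)} (hG : IsSimplicialComplex G)
    {x : Finset V} (hx : x ∈ G) (n : ℕ) :
    {c ∈ {c ∈ barycentric G | #c = n} | c.sup id = x} = chainsWithTop x n := by
  ext c
  simp only [mem_filter, barycentric, mem_powerset, mem_chainsWithTop]
  constructor
  · rintro ⟨⟨⟨hcG, hne, hc⟩, hcard⟩, rfl⟩
    exact ⟨fun y hy => le_sup (f := id) hy, sup_mem_of_chain hne hc,
      fun y hy => hG.1 y (hcG hy), hc, hcard⟩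
  · rintro ⟨hsub, hxc, hne, hc, hcard⟩
    refine ⟨⟨⟨fun y hy => hG.2 x hx y (hsub y hy) (hne y hy), ⟨x, hxc⟩, hc⟩, hcard⟩, ?_⟩
    exact le_antisymm (Finset.sup_le hsub) (le_sup (f := id) hxc)

end Chain

section Sublevel

variable {x : Finset V} {n : ℕ} (f : x → Fin n)

def sublevel (i : Fin n) : Finset V :=
  ({v | f v ≤ i} : Finset x).map (Function.Embedding.subtype _)

variable {f}

theorem mem_sublevel {i : Fin n} {u : V} : u ∈ sublevel f i ↔ ∃ h : u ∈ x, f ⟨u, h⟩ ≤ i := by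
  simp [sublevel]

theorem sublevel_subset (i : Fin n) : sublevel f i ⊆ x := fun _ hu =>
  (mem_sublevel.1 hu).1

theorem sublevel_mono : Monotone (sublevel f) := fun _ _ hij _ hu =>
  let ⟨h, hle⟩ := mem_sublevel.1 hu
  mem_sublevel.2 ⟨h, hle.trans hij⟩

theorem sublevel_strictMono (hf : Function.Surjective f) : StrictMono (sublevel f) := by
  intro i j hij
  refine lt_of_le_of_ne (sublevel_mono hij.le) fun heq => ?_
  obtain ⟨v, hv⟩ := hf j
  have hvj : v.1 ∈ sublevel f j := mem_sublevel.2 ⟨v.2, hv.le⟩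
  rw [← heq] at hvj
  obtain ⟨_, hle⟩ := mem_sublevel.1 hvj
  exact hij.not_ge (hv ▸ hle)

theorem surjective_of_injective_sublevel {k : ℕ} {f : x → Fin (k + 1)}
    (hinj : Function.Injective (sublevel f)) (h0 : (sublevel f 0).Nonempty) :
    Function.Surjective f := by
  intro i
  induction i using Fin.cases with
  | zero =>
    obtain ⟨u, hu⟩ := h0
    obtain ⟨h, hle⟩ := mem_sublevel.1 hu
    exact ⟨⟨u, h⟩, le_antisymm hle (Fin.zero_le _)⟩
  | succ j =>
    have hss : sublevel f j.castSucc ⊂ sublevel f j.succ :=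
      (sublevel_mono j.castSucc_lt_succ.le).ssubset_of_ne
        (hinj.ne j.castSucc_lt_succ.ne)
    obtain ⟨u, hu, hnu⟩ := exists_of_ssubset hss
    obtain ⟨h, hle⟩ := mem_sublevel.1 hu
    have hlt : ¬ f ⟨u, h⟩ < j.succ := fun hlt =>
      hnu (mem_sublevel.2 ⟨h, Fin.le_castSucc_iff.2 hlt⟩)
    exact ⟨⟨u, h⟩, le_antisymm hle (not_lt.1 hlt)⟩

variable [DecidableEq V]

def sublevels (f : x → Fin n) : Finset (Finset V) := univ.image (sublevel f)

theorem chainRank_sublevels (hf : Function.Surjective f) (v : x) :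
    chainRank (sublevels f) v = f v := by
  have hiff : ∀ i, v.1 ∉ sublevel f i ↔ i < f v := fun i => by simp [mem_sublevel]
  rw [chainRank, sublevels, filter_image,
    card_image_of_injective _ (sublevel_strictMono hf).injective]
  simp only [hiff, filter_gt_eq_Iio, Fin.card_Iio]

theorem sublevels_mem_chainsWithTop {k : ℕ} {f : x → Fin (k + 1)}
    (hf : Function.Surjective f) : sublevels f ∈ chainsWithTop x (k + 1) := by
  rw [mem_chainsWithTop, sublevels]
  simp only [forall_mem_image, mem_univ, forall_const]
  refine ⟨sublevel_subset, ?_, fun i => ?_, fun i j => ?_, ?_⟩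
  · refine mem_image.2 ⟨Fin.last k, mem_univ _, ?_⟩
    exact (sublevel_subset _).antisymm fun u hu => mem_sublevel.2 ⟨hu, Fin.le_last _⟩
  · obtain ⟨v, hv⟩ := hf 0
    exact ⟨v, mem_sublevel.2 ⟨v.2, hv ▸ Fin.zero_le i⟩⟩
  · exact (le_total i j).imp (fun h => sublevel_mono h) (fun h => sublevel_mono h)
  · rw [card_image_of_injective _ (sublevel_strictMono hf).injective, card_univ, Fintype.card_fin]

end Sublevel

section RankFunction

variable [DecidableEq V] {x : Finset V} {k : ℕ} {c : Finset (Finset V)}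

/-- The cast `Fin.ofNat` reduces modulo `k + 1`, which loses nothing on
`chainsWithTop x (k + 1)` by `chainRank_lt_card`. -/
def chainRankFin (x : Finset V) (k : ℕ) (c : Finset (Finset V)) : x → Fin (k + 1) :=
  fun v => Fin.ofNat (k + 1) (chainRank c v)

theorem val_chainRankFin (hc : c ∈ chainsWithTop x (k + 1)) (v : x) :
    (chainRankFin x k c v : ℕ) = chainRank c v := by
  obtain ⟨-, hx, -, -, hcard⟩ := mem_chainsWithTop.1 hc
  rw [chainRankFin, Fin.val_ofNat]
  exact Nat.mod_eq_of_lt (hcard ▸ chainRank_lt_card hx v.2)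

theorem exists_sublevel_chainRankFin_eq (hc : c ∈ chainsWithTop x (k + 1)) {y : Finset V}
    (hy : y ∈ c) : ∃ i, sublevel (chainRankFin x k c) i = y := by
  obtain ⟨hsub, -, -, hch, hcard⟩ := mem_chainsWithTop.1 hc
  refine ⟨⟨#{z ∈ c | z ⊂ y}, hcard ▸ card_filter_ssubset_lt_card hy⟩, ?_⟩
  ext u
  simp only [mem_sublevel, Fin.le_iff_val_le_val, val_chainRankFin hc]
  exact ⟨fun ⟨_, hle⟩ => (mem_iff_chainRank_le hch hy).2 hle,
    fun hu => ⟨hsub y hy hu, (mem_iff_chainRank_le hch hy).1 hu⟩⟩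

theorem sublevels_chainRankFin (hc : c ∈ chainsWithTop x (k + 1)) :
    sublevels (chainRankFin x k c) = c := by
  symm
  refine eq_of_subset_of_card_le (fun y hy => ?_) ?_
  · obtain ⟨i, hi⟩ := exists_sublevel_chainRankFin_eq hc hy
    exact mem_image.2 ⟨i, mem_univ _, hi⟩
  · rw [(mem_chainsWithTop.1 hc).2.2.2.2, sublevels]
    exact card_image_le.trans_eq (by simp)

theorem surjective_chainRankFin (hc : c ∈ chainsWithTop x (k + 1)) :
    Function.Surjective (chainRankFin x k c) := by
  obtain ⟨-, -, hne, -, hcard⟩ := mem_chainsWithTop.1 hc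
  have himage := sublevels_chainRankFin hc
  have hmem : sublevel (chainRankFin x k c) 0 ∈ sublevels (chainRankFin x k c) :=
    mem_image_of_mem _ (mem_univ 0)
  rw [himage] at hmem
  have hinj : Set.InjOn (sublevel (chainRankFin x k c)) (univ : Finset (Fin (k + 1))) := by
    refine card_image_iff.1 ?_
    change #(sublevels _) = _
    rw [himage, hcard, card_univ, Fintype.card_fin]
  rw [coe_univ, Set.injOn_univ] at hinj
  exact surjective_of_injective_sublevel hinj (hne _ hmem)

theorem card_chainsWithTop (x : Finset V) (k : ℕ) :
    #(chainsWithTop x (k + 1)) = #{f : x → Fin (k + 1) | Function.Surjective f} := by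
  refine card_nbij' (chainRankFin x k) (fun f => sublevels f) (fun c hc => ?_) (fun f hf => ?_)
    (fun c hc => sublevels_chainRankFin hc) (fun f hf => ?_)
  · exact mem_filter.2 ⟨mem_univ _, surjective_chainRankFin hc⟩
  · exact sublevels_mem_chainsWithTop (mem_filter.1 hf).2
  · have hf := (mem_filter.1 hf).2
    funext v
    exact Fin.ext <|
      (val_chainRankFin (sublevels_mem_chainsWithTop hf) v).trans (chainRank_sublevels hf v)

end RankFunction

end BarycentricChains

/-- the `f`-vector of the Barycentric refinement is obtained from the
`f`-vector of `G` via the Barycentric refinement operator: the number of chains of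
cardinality `k+1` is `∑_j s(j+1, k+1) · v_j(G)`, where `s(m, r)` counts surjections
from an `m`-set onto an `r`-set (the sum over `j` is truncated at the maximal
cardinality of a simplex of `G`, beyond which `v_j(G) = 0`). -/
theorem barycentric_f_vector
    {V : Type*} [DecidableEq V] (G : Finset (Finset V))
    (hG : IsSimplicialComplex G) (k : ℕ) :
    ((barycentric G).filter (fun c => c.card = k + 1)).card
      = ∑ j ∈ Finset.range (G.sup Finset.card),
          surjCount (j + 1) (k + 1) * (G.filter (fun x => x.card = j + 1)).card := by
  rw [card_eq_sum_card_fiberwise fun c hc => sup_mem_of_mem_barycentric (mem_filter.1 hc).1]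
  calc ∑ x ∈ G, #{c ∈ {c ∈ barycentric G | #c = k + 1} | c.sup id = x}
      = ∑ x ∈ G, surjCount #x (k + 1) := sum_congr rfl fun x hx => by
        rw [filter_sup_eq_chainsWithTop hG hx, card_chainsWithTop,
          card_filter_surjective_eq_surjCount, Fintype.card_coe]
    _ = _ := sum_comp_card_eq_sum_range G hG.1 (surjCount · (k + 1))
end

section
/- Wu characteristic of a simplex: let x be a nonempty finite set. Then Σ (−1)^(card(y)+card(z)) = (−1)^(card(x)−1), where the sum is over all ordered pairs (y, z) of nonempty subsets y, z ⊆ x with y ∩ z ≠ ∅. In other words, the Wu characteristic of the complete complex on a k-dimensional simplex equals (−1)^k. -/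
/-!
Over all pairs of subsets of `x` the signed count factors as `(∑_{y ⊆ x} (-1)^|y|)^2 = 0`.
Among the disjoint pairs, for fixed `y` the sum over `z ⊆ x \ y` vanishes unless `y = x`,
leaving `(-1)^|x|`. The intersecting pairs therefore contribute `-(-1)^|x| = (-1)^(|x| - 1)`.
-/

namespace Finset

variable {V : Type*}

theorem sum_powerset_product_neg_one_pow_card_add {x : Finset V} (hx : x.Nonempty) :
    ∑ p ∈ x.powerset ×ˢ x.powerset, (-1 : ℤ) ^ (#p.1 + #p.2) = 0 := by
  simp only [sum_product, pow_add, ← mul_sum, ← sum_mul, sum_powerset_neg_one_pow_card_of_nonempty hx,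
    zero_mul]

variable [DecidableEq V]

theorem filter_disjoint_powerset (x y : Finset V) :
    {z ∈ x.powerset | Disjoint y z} = (x \ y).powerset := by
  ext z
  simp only [mem_filter, mem_powerset, subset_sdiff, disjoint_comm]

theorem sum_powerset_product_disjoint_neg_one_pow_card_add (x : Finset V) :
    ∑ p ∈ x.powerset ×ˢ x.powerset with Disjoint p.1 p.2, (-1 : ℤ) ^ (#p.1 + #p.2)
      = (-1 : ℤ) ^ #x := by
  have inner (y : Finset V) (hy : y ∈ x.powerset) :
      ∑ z ∈ x.powerset with Disjoint y z, (-1 : ℤ) ^ (#y + #z)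
        = if y = x then (-1 : ℤ) ^ #x else 0 := by
    rw [filter_disjoint_powerset]
    simp only [pow_add, ← mul_sum, sum_powerset_neg_one_pow_card, sdiff_eq_empty_iff_subset]
    by_cases hyx : y = x
    · simp [hyx]
    · simpa [hyx] using fun h => hyx (subset_antisymm (mem_powerset.1 hy) h)
  rw [sum_filter, sum_product]
  simp only [← sum_filter]
  rw [sum_congr rfl inner, sum_ite_eq' _ _ _, if_pos (mem_powerset_self x)]

end Finset

open Finset

/-- Wu characteristic of a simplex: for a nonempty finite set `x`,
the sum of `(−1)^(card y + card z)` over all ordered pairs `(y, z)` of nonempty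
subsets of `x` with `y ∩ z ≠ ∅` equals `(−1)^(card x − 1)`. -/
theorem wu_characteristic_of_simplex
    {V : Type*} [DecidableEq V] (x : Finset V) (hx : x.Nonempty) :
    ∑ p ∈ (x.powerset ×ˢ x.powerset).filter (fun p => (p.1 ∩ p.2).Nonempty),
        (-1 : ℤ) ^ (p.1.card + p.2.card)
      = (-1 : ℤ) ^ (x.card - 1) := by
  have hsplit := sum_filter_add_sum_filter_not (x.powerset ×ˢ x.powerset)
    (fun p => (p.1 ∩ p.2).Nonempty) (fun p => (-1 : ℤ) ^ (#p.1 + #p.2))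
  simp only [not_nonempty_iff_eq_empty, ← disjoint_iff_inter_eq_empty,
    sum_powerset_product_disjoint_neg_one_pow_card_add,
    sum_powerset_product_neg_one_pow_card_add hx] at hsplit
  obtain ⟨n, hn⟩ : ∃ n, #x = n + 1 := Nat.exists_eq_add_one.2 hx.card_pos
  rw [eq_neg_of_add_eq_zero_left hsplit, hn, pow_succ, Nat.add_sub_cancel]
  ring
end

section
/- Discrete Hodge theory: let V be a finite-dimensional real inner product space and d : V → V a linear map with d ∘ d = 0, and let d* denote the adjoint of d. Then ker(d + d*) = ker d ∩ ker d*, and dim(ker d ∩ ker d*) = dim ker d − rank d; in particular the nullity of the Hodge operator L = (d + d*)² equals the dimension of the cohomology ker d / im d. -/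
/-!
Since `d ∘ d = 0`, the vectors `d x` and `d* x` are orthogonal (`⟪d x, d* x⟫ = ⟪d (d x), x⟫`),
so `d x + d* x = 0` forces both to vanish. As `ker d* = (range d)ᗮ` and `range d ≤ ker d`,
the space `ker d ⊓ ker d*` is the orthogonal complement of `range d` inside `ker d`, which
gives its dimension, and the same number is the dimension of `ker d ⧸ range d`. Finally
`d + d*` is self-adjoint, so its square has the same kernel.
-/

open Module Submodule

namespace LinearMap

section Homology

variable {K M N P : Type*} [DivisionRing K] [AddCommGroup M] [Module K M]
  [AddCommGroup N] [Module K N] [AddCommGroup P] [Module K P] [Module.Finite K N]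

theorem finrank_homology_add_finrank_range {f : M →ₗ[K] N} {g : N →ₗ[K] P}
    (hgf : g.comp f = 0) :
    finrank K (ker g ⧸ (range f).comap (ker g).subtype) + finrank K (range f)
      = finrank K (ker g) := by
  rw [← (comapSubtypeEquivOfLe (range_le_ker_iff.mpr hgf)).finrank_eq]
  exact finrank_quotient_add_finrank _

end Homology

section InnerProduct

variable {𝕜 E F : Type*} [RCLike 𝕜] [NormedAddCommGroup E] [InnerProductSpace 𝕜 E]
  [NormedAddCommGroup F] [InnerProductSpace 𝕜 F]

theorem ker_add_eq_inf_of_inner_eq_zero {f g : E →ₗ[𝕜] F}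
    (hfg : ∀ x, inner 𝕜 (f x) (g x) = 0) : ker (f + g) = ker f ⊓ ker g := by
  refine le_antisymm (fun x hx => ?_) (fun x ⟨hf, hg⟩ => by simp_all)
  rw [mem_ker, add_apply] at hx
  have hfx : f x = 0 := by
    rw [← inner_self_eq_zero (𝕜 := 𝕜)]
    calc inner 𝕜 (f x) (f x) = inner 𝕜 (f x) (f x + g x) := by
          rw [inner_add_right, hfg, add_zero]
      _ = 0 := by rw [hx, inner_zero_right]
  exact ⟨hfx, by simpa [hfx] using hx⟩

variable [FiniteDimensional 𝕜 E]

theorem inner_apply_adjoint_apply_of_comp_self_eq_zero {d : E →ₗ[𝕜] E}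
    (hd : d.comp d = 0) (x : E) : inner 𝕜 (d x) (adjoint d x) = 0 := by
  rw [adjoint_inner_right, ← comp_apply, hd, zero_apply, inner_zero_left]

theorem ker_add_adjoint_of_comp_self_eq_zero {d : E →ₗ[𝕜] E} (hd : d.comp d = 0) :
    ker (d + adjoint d) = ker d ⊓ ker (adjoint d) :=
  ker_add_eq_inf_of_inner_eq_zero (inner_apply_adjoint_apply_of_comp_self_eq_zero hd)

theorem finrank_ker_inf_ker_adjoint_add_finrank_range {d : E →ₗ[𝕜] E} (hd : d.comp d = 0) :
    finrank 𝕜 (ker d ⊓ ker (adjoint d) : Submodule 𝕜 E) + finrank 𝕜 (range d)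
      = finrank 𝕜 (ker d) := by
  rw [add_comm, ← orthogonal_range, inf_comm]
  exact finrank_add_inf_finrank_orthogonal (range_le_ker_iff.mpr hd)

theorem ker_comp_self_of_isSelfAdjoint {T : E →ₗ[𝕜] E} (hT : IsSelfAdjoint T) :
    ker (T ∘ₗ T) = ker T := by
  rw [← ker_adjoint_comp_self T, isSelfAdjoint_iff'.mp hT]

end InnerProduct

end LinearMap

open LinearMap in
/-- discrete Hodge theory: for a linear map `d` with `d ∘ d = 0` on a
finite-dimensional real inner product space, with adjoint `d*`:
`ker(d + d*) = ker d ∩ ker d*`, its dimension is `dim ker d − rank d`, and the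
nullity of the Hodge operator `L = (d + d*)²` equals the dimension of the
cohomology `ker d / im d`. -/
theorem discrete_hodge
    {V : Type*} [NormedAddCommGroup V] [InnerProductSpace ℝ V]
    [FiniteDimensional ℝ V]
    (d : V →ₗ[ℝ] V) (hd : d.comp d = 0) :
    LinearMap.ker (d + LinearMap.adjoint d)
        = LinearMap.ker d ⊓ LinearMap.ker (LinearMap.adjoint d) ∧
    (Module.finrank ℝ
        ↥(LinearMap.ker d ⊓ LinearMap.ker (LinearMap.adjoint d)) : ℤ)
        = (Module.finrank ℝ (LinearMap.ker d) : ℤ)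
          - (Module.finrank ℝ (LinearMap.range d) : ℤ) ∧
    Module.finrank ℝ
        (LinearMap.ker ((d + LinearMap.adjoint d) ∘ₗ (d + LinearMap.adjoint d)))
      = Module.finrank ℝ
          (↥(LinearMap.ker d) ⧸
            (LinearMap.range d).comap (LinearMap.ker d).subtype) := by
  have hker := ker_add_adjoint_of_comp_self_eq_zero hd
  have hharmonic := finrank_ker_inf_ker_adjoint_add_finrank_range hd
  have hcohomology := finrank_homology_add_finrank_range hd
  have hself : IsSelfAdjoint (d + adjoint d) := by
    simpa only [star_eq_adjoint] using IsSelfAdjoint.add_star_self d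
  refine ⟨hker, by omega, ?_⟩
  rw [ker_comp_self_of_isSelfAdjoint hself, hker]
  omega
end

section
/- McKean–Singer formula: let D and γ be real n×n matrices with γD = −Dγ. Then for every t ∈ ℝ, Tr(γ · exp(−t·D²)) = Tr(γ); i.e. the super trace of the heat kernel exp(−t·D²) is independent of t. -/
/-!
The super trace `A ↦ Tr(γ A)` is a continuous linear functional, so it can be applied termwise
to the exponential series of `-t • D²`. Every term with `k ≥ 1` is a multiple of `Tr(γ D^{2k})`,
and `Tr(γ D^k) = 0` for `k ≥ 1`: moving one factor `D` past `γ` costs a sign, and cycling it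
back through the trace returns `Tr(γ D^k)`. Only the constant term `Tr(γ)` survives.
-/

open NormedSpace

theorem Matrix.trace_mul_pow_eq_zero_of_anticommute {m R : Type*} [Fintype m] [DecidableEq m]
    [CommRing R] [IsAddTorsionFree R] {γ D : Matrix m m R} (hanti : γ * D = -(D * γ))
    {k : ℕ} (hk : 0 < k) : (γ * D ^ k).trace = 0 := by
  obtain ⟨k, rfl⟩ := Nat.exists_eq_add_one_of_ne_zero hk.ne'
  refine self_eq_neg.mp ?_
  calc (γ * D ^ (k + 1)).trace
      = -(D * (γ * D ^ k)).trace := by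
        rw [pow_succ', ← mul_assoc, hanti, neg_mul, trace_neg, mul_assoc]
    _ = -(γ * D ^ (k + 1)).trace := by
        rw [trace_mul_comm, mul_assoc, ← pow_succ]

theorem ContinuousLinearMap.map_exp_eq_map_one_of_map_pow_eq_zero {𝕂 𝔸 E : Type*}
    [NontriviallyNormedField 𝕂] [CharZero 𝕂] [ContinuousSMul ℚ 𝕂] [NormedRing 𝔸]
    [NormedAlgebra 𝕂 𝔸] [CompleteSpace 𝔸] [AddCommGroup E] [Module 𝕂 E] [TopologicalSpace E]
    [T2Space E] (L : 𝔸 →L[𝕂] E) {x : 𝔸} (hx : ∀ k, 0 < k → L (x ^ k) = 0) :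
    L (exp x) = L 1 := by
  refine ((exp_series_hasSum_exp' (𝕂 := 𝕂) x).mapL L).unique ?_
  convert hasSum_single 0 fun k hk => ?_ using 1
  · simp
  · rw [map_smul, hx k (Nat.pos_of_ne_zero hk), smul_zero]

/-- McKean–Singer: if `γ` anticommutes with `D` (`γD = −Dγ`), then the
super trace `Tr(γ · exp(−t·D²))` of the heat kernel is independent of `t`: it equals
`Tr(γ)` for every `t ∈ ℝ`. -/
theorem mckean_singer
    {n : ℕ} (D γ : Matrix (Fin n) (Fin n) ℝ)
    (hanti : γ * D = -(D * γ)) (t : ℝ) :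
    (γ * NormedSpace.exp (-t • (D ^ 2))).trace = γ.trace := by
  -- `exp` does not depend on a norm; any Banach algebra norm gives access to its series.
  let _ : NormedRing (Matrix (Fin n) (Fin n) ℝ) := Matrix.linftyOpNormedRing
  let _ : NormedAlgebra ℝ (Matrix (Fin n) (Fin n) ℝ) := Matrix.linftyOpNormedAlgebra
  let superTrace : Matrix (Fin n) (Fin n) ℝ →L[ℝ] ℝ :=
    LinearMap.toContinuousLinearMap ((Matrix.traceLinearMap _ ℝ ℝ).comp (.mulLeft ℝ γ))
  have h := superTrace.map_exp_eq_map_one_of_map_pow_eq_zero (x := -t • D ^ 2) fun k hk => by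
    change (γ * (-t • D ^ 2) ^ k).trace = 0
    rw [smul_pow, ← pow_mul, mul_smul_comm, Matrix.trace_smul,
      Matrix.trace_mul_pow_eq_zero_of_anticommute hanti (by omega), smul_zero]
  exact h.trans (congrArg Matrix.trace (mul_one γ))
end

section
/- Atiyah–Bott type heat invariance: let D, γ, U be real n×n matrices with γD = −Dγ and UD = DU. Then for every t ∈ ℝ, Tr(γ·U·exp(−t·D²)) = Tr(γ·U); i.e. the super trace of U against the heat kernel exp(−t·D²) is independent of t. -/
/-!
Expanding the heat kernel as a power series gives
`Tr(γ U exp(-t D²)) = ∑ₖ (-t)ᵏ / k! · Tr(γ U D²ᵏ)`. Every term with `k ≥ 1` vanishes: cycling one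
factor `D` to the front of the trace and moving it back past `γ` (which it anticommutes with) and
`U` (which it commutes with) changes the sign of the trace.
-/

open Matrix NormedSpace
open scoped Nat

namespace Matrix

variable {m R : Type*} [Fintype m] [DecidableEq m]

theorem trace_mul_mul_pow_succ_eq_zero_of_anticommute [CommRing R] [NoZeroDivisors R]
    [CharZero R] {γ U D : Matrix m m R} (hanti : γ * D = -(D * γ)) (hcomm : U * D = D * U)
    (k : ℕ) : (γ * U * D ^ (k + 1)).trace = 0 := by
  rw [← CharZero.eq_neg_self_iff]
  calc (γ * U * D ^ (k + 1)).trace = (D * γ * U * D ^ k).trace := by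
        rw [pow_succ, ← mul_assoc, trace_mul_comm, ← mul_assoc, ← mul_assoc]
    _ = -(γ * (U * D) * D ^ k).trace := by
        rw [← neg_eq_iff_eq_neg.mpr hanti, hcomm, ← trace_neg]; noncomm_ring
    _ = -(γ * U * D ^ (k + 1)).trace := by rw [pow_succ', ← mul_assoc, ← mul_assoc]

section

attribute [local instance] Matrix.linftyOpNormedRing Matrix.linftyOpNormedAlgebra

theorem hasSum_trace_mul_exp {𝕂 : Type*} [RCLike 𝕂] (A X : Matrix m m 𝕂) :
    HasSum (fun k : ℕ => (k ! : 𝕂)⁻¹ * (A * X ^ k).trace) (A * exp X).trace := by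
  have h := ((exp_series_hasSum_exp' (𝕂 := 𝕂) X).mul_left A).map (traceAddMonoidHom m 𝕂)
    continuous_id.matrix_trace
  simp only [Function.comp_def, traceAddMonoidHom_apply, Matrix.mul_smul, trace_smul,
    smul_eq_mul] at h
  exact h

end

end Matrix

/-- Atiyah–Bott type heat invariance: if `γ` anticommutes with `D`
(`γD = −Dγ`) and `U` commutes with `D` (`UD = DU`), then the super trace
`Tr(γ·U·exp(−t·D²))` is independent of `t`: it equals `Tr(γ·U)` for all `t ∈ ℝ`. -/
theorem atiyah_bott_heat_invariance
    {n : ℕ} (D γ U : Matrix (Fin n) (Fin n) ℝ)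
    (hanti : γ * D = -(D * γ)) (hcomm : U * D = D * U) (t : ℝ) :
    (γ * U * NormedSpace.exp (-t • (D ^ 2))).trace = (γ * U).trace := by
  refine (hasSum_trace_mul_exp (γ * U) (-t • D ^ 2)).unique ?_
  convert hasSum_single 0 fun k hk => ?_ using 1
  · simp
  · obtain ⟨j, rfl⟩ := Nat.exists_eq_add_one_of_ne_zero hk
    rw [smul_pow, Matrix.mul_smul, trace_smul, ← pow_mul, mul_add_one,
      trace_mul_mul_pow_succ_eq_zero_of_anticommute hanti hcomm, smul_zero, mul_zero]
end

section
/- Cohomological Lefschetz number as a flat trace: let D be a symmetric real n×n matrix, γ a real n×n matrix with γ² = I and γD = −Dγ, and U a real n×n matrix with UD = DU, and let P be the matrix of the orthogonal projection of ℝⁿ onto ker D. Then Tr(γ·U) = Tr(γ·U·P); i.e. the super trace of U equals the super trace of the map induced by U on the kernel of D (harmonic forms). -/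
/-!
Let `K = ker D`. Since `D` is symmetric, `range D ⟂ K`, so `D + P` is invertible, and its inverse
`B` satisfies `B D = D B = 1 - P`. As `γ U` anticommutes with `D`, cyclicity of the trace gives
`Tr(γ U (1 - P)) = Tr(γ U D B) = -Tr(γ U B D) = -Tr(γ U (1 - P))`, hence `Tr(γ U (1 - P)) = 0`.
-/

open ContinuousLinearMap Submodule

section KernelProjection

variable {𝕜 E : Type*} [RCLike 𝕜] [NormedAddCommGroup E] [InnerProductSpace 𝕜 E]
  [CompleteSpace E]

lemma ContinuousLinearMap.mul_starProjection_ker (T : E →L[𝕜] E) :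
    T * T.ker.starProjection = 0 := by
  ext x
  exact LinearMap.mem_ker.mp (T.ker.starProjection_apply_mem x)

variable {T : E →L[𝕜] E}

lemma IsSelfAdjoint.apply_mem_orthogonal_ker (hT : IsSelfAdjoint T) (x : E) : T x ∈ T.kerᗮ := by
  intro y (hy : T y = 0)
  rw [← coe_coe, ← hT.isSymmetric, coe_coe, hy, inner_zero_left]

lemma IsSelfAdjoint.starProjection_ker_mul (hT : IsSelfAdjoint T) :
    T.ker.starProjection * T = 0 := by
  ext x
  exact T.ker.starProjection_apply_eq_zero_iff.mpr (hT.apply_mem_orthogonal_ker x)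

lemma IsSelfAdjoint.isUnit_add_starProjection_ker [FiniteDimensional 𝕜 E]
    (hT : IsSelfAdjoint T) : IsUnit (T + T.ker.starProjection) := by
  rw [isUnit_iff_isUnit_toLinearMap, LinearMap.isUnit_iff_ker_eq_bot, LinearMap.ker_eq_bot']
  intro x hx
  replace hx : T.ker.starProjection x = -T x := eq_neg_of_add_eq_zero_right hx
  have hTx : T x = 0 := by
    rw [← Submodule.mem_bot 𝕜, ← T.ker.inf_orthogonal_eq_bot]
    exact ⟨neg_mem_iff.mp (hx ▸ T.ker.starProjection_apply_mem x),
      hT.apply_mem_orthogonal_ker x⟩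
  rw [← T.ker.starProjection_eq_self_iff.mpr hTx, hx, hTx, neg_zero]

end KernelProjection

lemma exists_mul_eq_one_sub_of_isUnit_add {R : Type*} [Ring R] {d p : R}
    (hdp : d * p = 0) (hpd : p * d = 0) (hp : IsIdempotentElem p) (hu : IsUnit (d + p)) :
    ∃ b, b * d = 1 - p ∧ d * b = 1 - p := by
  obtain ⟨b, hb, hb'⟩ := isUnit_iff_exists.mp hu
  have hright : (d + p) * (1 - p) = d := by
    rw [mul_sub, mul_one, add_mul, hdp, hp.eq]; abel
  have hleft : (1 - p) * (d + p) = d := by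
    rw [sub_mul, one_mul, mul_add, hpd, hp.eq]; abel
  refine ⟨b, ?_, ?_⟩
  · rw [← hright, ← mul_assoc, hb', one_mul]
  · rw [← hleft, mul_assoc, hb, mul_one]

namespace Matrix

lemma trace_mul_mul_eq_neg_of_anticommute {n R : Type*} [Fintype n] [CommRing R]
    {M D : Matrix n n R} (h : M * D = -(D * M)) (B : Matrix n n R) :
    (M * D * B).trace = -(M * B * D).trace := by
  rw [h, neg_mul, trace_neg, mul_assoc, trace_mul_comm, mul_assoc]

lemma IsHermitian.exists_mul_eq_one_sub_starProjection {𝕜 n : Type*} [RCLike 𝕜] [Fintype n]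
    [DecidableEq n] {D P : Matrix n n 𝕜} (hD : D.IsHermitian)
    (hP : toEuclideanCLM (n := n) (𝕜 := 𝕜) P =
      (LinearMap.ker (toEuclideanLin D)).starProjection) :
    ∃ B, B * D = 1 - P ∧ D * B = 1 - P := by
  let e := toEuclideanCLM (n := n) (𝕜 := 𝕜)
  have hT : IsSelfAdjoint (e D) := hD.isSelfAdjoint.map e
  obtain ⟨b, hbD, hDb⟩ := exists_mul_eq_one_sub_of_isUnit_add (e D).mul_starProjection_ker
    hT.starProjection_ker_mul (isIdempotentElem_starProjection _) hT.isUnit_add_starProjection_ker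
  refine ⟨e.symm b, EquivLike.injective e ?_, EquivLike.injective e ?_⟩ <;>
    rw [map_mul, map_sub, map_one, e.apply_symm_apply, hP]
  exacts [hbD, hDb]

end Matrix

theorem lefschetz_flat_trace_general
    {n : ℕ} (D γ U P : Matrix (Fin n) (Fin n) ℝ)
    (hD : D.IsSymm) (hanti : γ * D = -(D * γ))
    (hcomm : U * D = D * U)
    (hP : Matrix.toEuclideanLin P =
      ((LinearMap.ker (Matrix.toEuclideanLin D)).subtypeL.comp
        (Submodule.orthogonalProjection (LinearMap.ker (Matrix.toEuclideanLin D)))).toLinearMap) :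
    (γ * U).trace = (γ * U * P).trace := by
  obtain ⟨B, hBD, hDB⟩ :=
    (Matrix.isHermitian_iff_isSymm.mpr hD).exists_mul_eq_one_sub_starProjection (coe_injective hP)
  have hγU : γ * U * D = -(D * (γ * U)) := by
    rw [mul_assoc, hcomm, ← mul_assoc, hanti, neg_mul, mul_assoc]
  have h := Matrix.trace_mul_mul_eq_neg_of_anticommute hγU B
  rw [mul_assoc (γ * U) D, hDB, mul_assoc (γ * U) B, hBD, mul_sub, mul_one, Matrix.trace_sub] at h
  linarith

/-- cohomological Lefschetz number as a flat trace: if `D` is a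
symmetric real `n×n` matrix, `γ` an involution anticommuting with `D`, `U` a matrix
commuting with `D`, and `P` the matrix of the orthogonal projection of `ℝⁿ` onto
`ker D`, then the super trace of `U` equals the super trace of the map induced by
`U` on the harmonic space `ker D`: `Tr(γ·U) = Tr(γ·U·P)`. -/
theorem lefschetz_flat_trace
    {n : ℕ} (D γ U P : Matrix (Fin n) (Fin n) ℝ)
    (hD : D.IsSymm) (hγ : γ * γ = 1) (hanti : γ * D = -(D * γ))
    (hcomm : U * D = D * U)
    (hP : Matrix.toEuclideanLin P =
      ((LinearMap.ker (Matrix.toEuclideanLin D)).subtypeL.comp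
        (Submodule.orthogonalProjection (LinearMap.ker (Matrix.toEuclideanLin D)))).toLinearMap) :
    (γ * U).trace = (γ * U * P).trace :=
  lefschetz_flat_trace_general D γ U P hD hanti hcomm hP
end

section
/- Isospectrality of Lax deformations: let D : ℝ → M_n(ℝ) be a differentiable matrix-valued function and B : ℝ → M_n(ℝ) a function such that D'(t) = B(t)·D(t) − D(t)·B(t) for all t. Then for every natural number m, the function t ↦ Tr(D(t)^m) is constant; consequently the characteristic polynomial and hence the spectrum of D(t) does not depend on t. -/
/-!
Along a Lax flow `D' = BD - DB` the Leibniz rule gives `(D^k)' = B D^k - D^k B`, a commutator,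
so `Tr (D^k)` has zero derivative. For the characteristic polynomial, `M = x - D` is again a Lax
flow for the same `B`, and by Jacobi's formula `(det M)' = Tr (adj M · M')` its determinant has
derivative `Tr (adj M · B · M) - Tr (adj M · M · B) = Tr (det M · B) - Tr (det M · B) = 0`.
So every value `det (x - D t)` of the characteristic polynomial is constant in `t`.
-/

open Matrix Finset

namespace Matrix

variable {R n : Type*} [CommRing R] [Fintype n] [DecidableEq n]

theorem trace_adjugate_mul_eq_sum_det_updateCol (A N : Matrix n n R) :
    (adjugate A * N).trace = ∑ i, (A.updateCol i fun k => N k i).det := by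
  refine Finset.sum_congr rfl fun i _ => ?_
  rw [← cramer_apply, cramer_eq_adjugate_mulVec]
  rfl

theorem det_updateCol_eq_sum_perm (A : Matrix n n R) (i : n) (c : n → R) :
    (A.updateCol i c).det =
      ∑ σ : Equiv.Perm n,
        ((Equiv.Perm.sign σ : ℤ) : R) * ((∏ j ∈ univ.erase i, A (σ j) j) * c (σ i)) := by
  rw [det_apply']
  refine Finset.sum_congr rfl fun σ _ => ?_
  rw [← Finset.mul_prod_erase univ _ (mem_univ i), updateCol_self,
    Finset.prod_congr rfl fun j hj => updateCol_ne (Finset.ne_of_mem_erase hj)]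
  ring

theorem trace_adjugate_mul_commutator_eq_zero (A B : Matrix n n R) :
    (adjugate A * (B * A - A * B)).trace = 0 := by
  rw [mul_sub, trace_sub, ← mul_assoc, trace_mul_comm, ← mul_assoc, ← mul_assoc,
    mul_adjugate, adjugate_mul, sub_self]

end Matrix

section EntrywiseDerivative

variable {𝕜 : Type*} [NontriviallyNormedField 𝕜] {l m n : Type*}

def HasEntrywiseDerivAt (M : 𝕜 → Matrix m n 𝕜) (M' : Matrix m n 𝕜) (t : 𝕜) : Prop :=
  ∀ i j, HasDerivAt (fun s => M s i j) (M' i j) t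

variable {t : 𝕜}

theorem HasEntrywiseDerivAt.const (A : Matrix m n 𝕜) :
    HasEntrywiseDerivAt (fun _ => A) 0 t :=
  fun _ _ => hasDerivAt_const t _

theorem HasEntrywiseDerivAt.sub {M N : 𝕜 → Matrix m n 𝕜} {M' N' : Matrix m n 𝕜}
    (hM : HasEntrywiseDerivAt M M' t) (hN : HasEntrywiseDerivAt N N' t) :
    HasEntrywiseDerivAt (fun s => M s - N s) (M' - N') t :=
  fun i j => (hM i j).sub (hN i j)

theorem HasEntrywiseDerivAt.mul [Fintype m] {M : 𝕜 → Matrix l m 𝕜} {N : 𝕜 → Matrix m n 𝕜}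
    {M' : Matrix l m 𝕜} {N' : Matrix m n 𝕜}
    (hM : HasEntrywiseDerivAt M M' t) (hN : HasEntrywiseDerivAt N N' t) :
    HasEntrywiseDerivAt (fun s => M s * N s) (M' * N t + M t * N') t := by
  intro i j
  simp only [mul_apply, Matrix.add_apply, ← Finset.sum_add_distrib]
  exact HasDerivAt.fun_sum fun k _ => (hM i k).fun_mul (hN k j)

theorem HasEntrywiseDerivAt.trace [Fintype n] {M : 𝕜 → Matrix n n 𝕜} {M' : Matrix n n 𝕜}
    (hM : HasEntrywiseDerivAt M M' t) :
    HasDerivAt (fun s => (M s).trace) M'.trace t :=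
  HasDerivAt.fun_sum fun i _ => hM i i

theorem HasEntrywiseDerivAt.det [Fintype n] [DecidableEq n] {M : 𝕜 → Matrix n n 𝕜}
    {M' : Matrix n n 𝕜} (hM : HasEntrywiseDerivAt M M' t) :
    HasDerivAt (fun s => (M s).det) (adjugate (M t) * M').trace t := by
  have h := HasDerivAt.fun_sum (u := univ) fun (σ : Equiv.Perm n) _ =>
    (HasDerivAt.fun_finsetProd (u := univ) fun i _ => hM (σ i) i).const_mul
      ((Equiv.Perm.sign σ : ℤ) : 𝕜)
  simp only [← det_apply'] at h
  refine h.congr_deriv ?_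
  simp only [trace_adjugate_mul_eq_sum_det_updateCol, det_updateCol_eq_sum_perm, smul_eq_mul,
    Finset.mul_sum]
  exact Finset.sum_comm

variable [Fintype n] [DecidableEq n] {D : 𝕜 → Matrix n n 𝕜} {B : Matrix n n 𝕜}

theorem HasEntrywiseDerivAt.pow_of_lax (hD : HasEntrywiseDerivAt D (B * D t - D t * B) t)
    (k : ℕ) : HasEntrywiseDerivAt (fun s => D s ^ k) (B * D t ^ k - D t ^ k * B) t := by
  induction k with
  | zero => simpa using HasEntrywiseDerivAt.const (t := t) (1 : Matrix n n 𝕜)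
  | succ k ih =>
    simp only [pow_succ]
    convert ih.mul hD using 1
    noncomm_ring

theorem HasEntrywiseDerivAt.scalar_sub_of_lax (hD : HasEntrywiseDerivAt D (B * D t - D t * B) t)
    (x : 𝕜) :
    HasEntrywiseDerivAt (fun s => scalar n x - D s)
      (B * (scalar n x - D t) - (scalar n x - D t) * B) t := by
  convert (HasEntrywiseDerivAt.const (scalar n x)).sub hD using 1
  rw [mul_sub, sub_mul, (scalar_commute x (fun _ => Commute.all _ _) B).eq]
  abel

end EntrywiseDerivative

section Lax

variable {𝕜 n : Type*} [RCLike 𝕜] [Fintype n] [DecidableEq n] {D B : 𝕜 → Matrix n n 𝕜}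

theorem trace_pow_eq_of_lax (hD : ∀ t, HasEntrywiseDerivAt D (B t * D t - D t * B t) t)
    (k : ℕ) (s t : 𝕜) : (D s ^ k).trace = (D t ^ k).trace := by
  have hderiv (t : 𝕜) : HasDerivAt (fun s => (D s ^ k).trace) 0 t := by
    convert ((hD t).pow_of_lax k).trace using 1
    rw [trace_sub, trace_mul_comm, sub_self]
  exact is_const_of_deriv_eq_zero (fun t => (hderiv t).differentiableAt)
    (fun t => (hderiv t).deriv) s t

theorem det_eq_of_lax (hD : ∀ t, HasEntrywiseDerivAt D (B t * D t - D t * B t) t)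
    (s t : 𝕜) : (D s).det = (D t).det := by
  have hderiv (t : 𝕜) : HasDerivAt (fun s => (D s).det) 0 t := by
    convert (hD t).det using 1
    rw [trace_adjugate_mul_commutator_eq_zero]
  exact is_const_of_deriv_eq_zero (fun t => (hderiv t).differentiableAt)
    (fun t => (hderiv t).deriv) s t

theorem charpoly_eq_of_lax (hD : ∀ t, HasEntrywiseDerivAt D (B t * D t - D t * B t) t)
    (s t : 𝕜) : (D s).charpoly = (D t).charpoly :=
  Polynomial.funext fun x => by
    simp only [eval_charpoly]
    exact det_eq_of_lax (fun t => (hD t).scalar_sub_of_lax x) s t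

end Lax

/-- isospectrality of Lax deformations: if a differentiable family of
matrices `D(t)` satisfies the Lax equation `D'(t) = B(t)·D(t) − D(t)·B(t)`
(entrywise derivatives), then every trace power `Tr(D(t)^m)` is constant in `t`, and
consequently the characteristic polynomial (hence the spectrum) of `D(t)` does not
depend on `t`. -/
theorem lax_deformation_isospectral
    {n : ℕ} (D B : ℝ → Matrix (Fin n) (Fin n) ℝ)
    (hD : ∀ (t : ℝ) (i j : Fin n),
      HasDerivAt (fun s => D s i j) ((B t * D t - D t * B t) i j) t) :
    (∀ (m : ℕ) (s t : ℝ), (D s ^ m).trace = (D t ^ m).trace) ∧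
    (∀ s t : ℝ, (D s).charpoly = (D t).charpoly) :=
  ⟨trace_pow_eq_of_lax hD, charpoly_eq_of_lax hD⟩
end
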